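/- Let X be a nonempty proper metric space (all closed balls compact), Y a metric space, and P : X → Y a submetry. Then P also maps closed balls onto closed balls of the same radius: for every x ∈ X and every real r ≥ 0, P '' (Metric.closedBall x r) = Metric.closedBall (P x) r. -/

import Mathlib

/-!
A submetry does not increase distances, so it maps `closedBall x r` into `closedBall (P x) r`
and is continuous. Conversely, for `y ∈ closedBall (P x) r` the fibre `P ⁻¹' {y}` is closed and,
by the submetry property, meets every ball `ball x (r + ε)`; in a proper space the distance from
`x` to a closed nonempty set is attained, so the fibre meets `closedBall x r`.
-/

open Metric

/-- A map `P : X → Y` between metric spaces is a submetry if it maps every open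
ball onto the open ball of the same radius around the image of the center. -/
def IsSubmetry {X Y : Type*} [MetricSpace X] [MetricSpace Y] (P : X → Y) : Prop :=
  ∀ (x : X) (r : ℝ), 0 < r → P '' Metric.ball x r = Metric.ball (P x) r

theorem IsClosed.inter_closedBall_nonempty_of_forall_inter_ball {X : Type*}
    [PseudoMetricSpace X] [ProperSpace X] {s : Set X} (hs : IsClosed s) {x : X} {r : ℝ}
    (h : ∀ ε > 0, (s ∩ ball x (r + ε)).Nonempty) : (s ∩ closedBall x r).Nonempty := by
  obtain ⟨z₀, hz₀, -⟩ := h 1 one_pos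
  obtain ⟨z, hz, hxz⟩ := hs.exists_infDist_eq_dist ⟨z₀, hz₀⟩ x
  refine ⟨z, hz, ?_⟩
  rw [mem_closedBall, dist_comm, ← hxz]
  refine le_of_forall_pos_lt_add fun ε hε => (infDist_lt_iff ⟨z₀, hz₀⟩).2 ?_
  obtain ⟨w, hws, hw⟩ := h ε hε
  exact ⟨w, hws, by rwa [dist_comm, ← mem_ball]⟩

namespace IsSubmetry

variable {X Y : Type*} [MetricSpace X] [MetricSpace Y] {P : X → Y}

theorem preimage_inter_ball_nonempty (hP : IsSubmetry P) {x : X} {y : Y} {r : ℝ}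
    (hy : y ∈ ball (P x) r) : (P ⁻¹' {y} ∩ ball x r).Nonempty := by
  rw [← hP x r (nonempty_ball.1 ⟨y, hy⟩)] at hy
  obtain ⟨z, hz, hzy⟩ := hy
  exact ⟨z, hzy, hz⟩

theorem dist_le (hP : IsSubmetry P) (a b : X) : dist (P a) (P b) ≤ dist a b :=
  le_of_forall_gt_imp_ge_of_dense fun r hr => by
    have hPb : P b ∈ P '' ball a r := ⟨b, by rwa [mem_ball, dist_comm], rfl⟩
    rw [hP a r (dist_nonneg.trans_lt hr), mem_ball, dist_comm] at hPb
    exact hPb.le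

theorem lipschitzWith (hP : IsSubmetry P) : LipschitzWith 1 P :=
  LipschitzWith.mk_one hP.dist_le

end IsSubmetry

theorem submetry_image_closedBall_general {X Y : Type*} [MetricSpace X] [MetricSpace Y]
    [ProperSpace X] (P : X → Y) (hP : IsSubmetry P) :
    ∀ (x : X) (r : ℝ), 0 ≤ r →
      P '' Metric.closedBall x r = Metric.closedBall (P x) r := by
  intro x r _
  refine subset_antisymm ?_ fun y hy => ?_
  · simpa using (hP.lipschitzWith.mapsTo_closedBall x r).image_subset
  have hfibre : IsClosed (P ⁻¹' {y}) := isClosed_singleton.preimage hP.lipschitzWith.continuous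
  have hnear : ∀ ε > 0, (P ⁻¹' {y} ∩ ball x (r + ε)).Nonempty := fun ε hε =>
    hP.preimage_inter_ball_nonempty <| mem_ball.2 <| by linarith [mem_closedBall.1 hy]
  obtain ⟨z, hzy, hz⟩ := hfibre.inter_closedBall_nonempty_of_forall_inter_ball hnear
  exact ⟨z, hz, hzy⟩

/-- A submetry from a proper metric space maps closed balls onto closed balls of
the same radius. -/
theorem submetry_image_closedBall {X Y : Type*} [MetricSpace X] [MetricSpace Y]
    [Nonempty X] [ProperSpace X] (P : X → Y) (hP : IsSubmetry P) :
    ∀ (x : X) (r : ℝ), 0 ≤ r →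
      P '' Metric.closedBall x r = Metric.closedBall (P x) r :=
  submetry_image_closedBall_general P hP
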